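/- In the setting of the incremental Cholesky update, for a remaining index i ∉ C∪{j}, setting e_i = (K_{ji} − ⟨c_j, c_i⟩)/d_j and c_i' = (c_i, e_i) gives L'·c_i' = K_{C∪{j}, i}, and the updated score satisfies d_i'² = K_{ii} − ‖c_i'‖² = d_i² − e_i². -/

import Mathlib

open Matrix

/-- Principal submatrix of `K` indexed by `C`. -/
def principalSub {m : ℕ} (K : Matrix (Fin m) (Fin m) ℝ) (C : Finset (Fin m)) :
    Matrix {i // i ∈ C} {i // i ∈ C} ℝ :=
  K.submatrix Subtype.val Subtype.val

theorem cholesky_incremental_update {m : ℕ} (K : Matrix (Fin m) (Fin m) ℝ)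
    (C : Finset (Fin m)) (j i : Fin m) (hj : j ∉ C) (hi : i ∉ C) (hij : i ≠ j)
    (L : Matrix {a // a ∈ C} {a // a ∈ C} ℝ)
    (hLinv : IsUnit L.det)
    (hL : principalSub K C = L * Lᵀ)
    (cj ci : {a // a ∈ C} → ℝ)
    (hcj : cj = L⁻¹.mulVec (fun a : {a // a ∈ C} => K a.1 j))
    (hci : ci = L⁻¹.mulVec (fun a : {a // a ∈ C} => K a.1 i))
    (dj : ℝ) (hdj : dj ^ 2 = K j j - ∑ a, cj a ^ 2) (hdjpos : 0 < dj)
    (ei : ℝ) (hei : ei = (K j i - ∑ a, cj a * ci a) / dj) :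
    (fromBlocks L 0 (Matrix.replicateRow Unit cj) (of fun _ _ : Unit => dj)).mulVec
        (Sum.elim ci (fun _ : Unit => ei)) =
      Sum.elim (fun a : {a // a ∈ C} => K a.1 i) (fun _ : Unit => K j i) ∧
    K i i - (∑ a, ci a ^ 2 + ei ^ 2) = (K i i - ∑ a, ci a ^ 2) - ei ^ 2 := by
  have hLci : L.mulVec ci = fun a : {a // a ∈ C} => K a.1 i := by
    rw [hci, Matrix.mulVec_mulVec, Matrix.mul_nonsing_inv _ hLinv, Matrix.one_mulVec]
  constructor
  · funext x
    cases x with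
    | inl a =>
      simp only [mulVec, fromBlocks, dotProduct, Fintype.sum_sum_type, Sum.elim_inl,
        of_apply, Sum.elim_inr]
      have := congrFun hLci a
      simp only [mulVec, dotProduct] at this
      simpa using this
    | inr u =>
      simp only [mulVec, fromBlocks, dotProduct, Fintype.sum_sum_type, Sum.elim_inl,
        of_apply, Sum.elim_inr, Matrix.replicateRow_apply]
      have : dj * ei = K j i - ∑ a, cj a * ci a := by
        rw [hei, mul_div_cancel₀ _ hdjpos.ne']
      simp [this]
  · ring
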